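/- arXiv:1411.2928 — 4 statements merged into one kernel-verified Lean document; each statement's English description precedes it below -/
import Mathlib

section
/- Any two disjoint compact convex polygons in the plane, each of whose sides is parallel to one of the lines in a fixed finite set L of lines through the origin, can be separated by a line parallel to some line in L. -/
noncomputable section

abbrev Pl := EuclideanSpace ℝ (Fin 2)

/-- `P` is a compact convex polygon each of whose sides is parallel to one of the lines through
the origin whose directions belong to `L` (lines are encoded by nonzero direction vectors;
the polygon is an intersection of closed half-planes whose boundary normals are perpendicular
to some direction in `L`). -/
def IsPolyDir (L : Finset Pl) (P : Set Pl) : Prop :=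
  IsCompact P ∧ P.Nonempty ∧
    ∃ F : Finset (Pl × ℝ),
      (∀ q ∈ F, q.1 ≠ 0 ∧ ∃ v ∈ L, (inner ℝ q.1 v : ℝ) = 0) ∧
      P = ⋂ q ∈ F, {x : Pl | (inner ℝ x q.1 : ℝ) ≤ q.2}

/-!
Write `P` and `Q` as intersections of half-planes with the admissible normals. If no admissible
line separates them, then every half-plane of `P` meets `Q` (otherwise its boundary line would
separate) and every half-plane of `Q` meets `P`. Among any three of all these half-planes, at most
one comes from one of the two polygons, so any three of them share a point of `P` or of `Q`.
Helly's theorem in the plane then yields a common point of all of them, that is, a point of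
`P ∩ Q`.
-/

open Finset

theorem Finset.card_sdiff_le_one_or_of_card_le_three {α : Type*} [DecidableEq α]
    {I s t : Finset α} (hI : I ⊆ s ∪ t) (hcard : #I ≤ 3) :
    #(I \ s) ≤ 1 ∨ #(I \ t) ≤ 1 := by
  have hdisj : Disjoint (I \ s) (I \ t) := by
    rw [disjoint_left]
    intro a has hat
    rcases mem_union.1 (hI (mem_sdiff.1 has).1) with h | h
    exacts [(mem_sdiff.1 has).2 h, (mem_sdiff.1 hat).2 h]
  have : #(I \ s) + #(I \ t) ≤ #I := by
    rw [← card_union_of_disjoint hdisj]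
    exact card_le_card (union_subset sdiff_subset sdiff_subset)
  omega

theorem Finset.set_biInter_nonempty_of_card_sdiff_le_one {ι β : Type*} [DecidableEq ι]
    {F : ι → Set β} {I s t : Finset ι} (hI : I ⊆ s ∪ t) (hcard : #(I \ s) ≤ 1)
    (hs : (⋂ i ∈ s, F i).Nonempty) (hts : ∀ j ∈ t, (F j ∩ ⋂ i ∈ s, F i).Nonempty) :
    (⋂ i ∈ I, F i).Nonempty := by
  rcases (I \ s).eq_empty_or_nonempty with hempty | ⟨j, hj⟩
  · exact hs.mono (Set.biInter_subset_biInter_left (sdiff_eq_empty_iff_subset.1 hempty))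
  · have hjt : j ∈ t := by
      rcases mem_union.1 (hI (mem_sdiff.1 hj).1) with h | h
      exacts [absurd h (mem_sdiff.1 hj).2, h]
    have hIjs : I ⊆ insert j s := by
      intro i hi
      by_cases his : i ∈ s
      · exact mem_insert_of_mem his
      · exact mem_insert.2 (Or.inl (card_le_one.1 hcard i (mem_sdiff.2 ⟨hi, his⟩) j hj))
    refine (hts j hjt).mono ?_
    rw [← set_biInter_insert]
    exact Set.biInter_subset_biInter_left hIjs

theorem Convex.inter_biInter_nonempty_of_finrank_eq_two {ι 𝕜 E : Type*} [Field 𝕜]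
    [LinearOrder 𝕜] [IsStrictOrderedRing 𝕜] [AddCommGroup E] [Module 𝕜 E] [FiniteDimensional 𝕜 E]
    [DecidableEq ι] (hE : Module.finrank 𝕜 E = 2) {F : ι → Set E} {s t : Finset ι}
    (hconv : ∀ i ∈ s ∪ t, Convex 𝕜 (F i))
    (hs : (⋂ i ∈ s, F i).Nonempty) (ht : (⋂ i ∈ t, F i).Nonempty)
    (hts : ∀ j ∈ t, (F j ∩ ⋂ i ∈ s, F i).Nonempty)
    (hst : ∀ j ∈ s, (F j ∩ ⋂ i ∈ t, F i).Nonempty) :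
    ((⋂ i ∈ s, F i) ∩ ⋂ i ∈ t, F i).Nonempty := by
  rw [← set_biInter_inter]
  refine Convex.helly_theorem' hconv fun I hI hcard => ?_
  rcases card_sdiff_le_one_or_of_card_le_three hI (by rwa [hE] at hcard) with h | h
  · exact set_biInter_nonempty_of_card_sdiff_le_one hI h hs hts
  · exact set_biInter_nonempty_of_card_sdiff_le_one (union_comm s t ▸ hI) h ht hst

section Separation

variable {E : Type*} [NormedAddCommGroup E] [InnerProductSpace ℝ E]

def SeparatedBy (w : E) (S K : Set E) : Prop :=
  ∃ c : ℝ, (∀ x ∈ S, inner ℝ x w ≤ c) ∧ ∀ x ∈ K, c ≤ inner ℝ x w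

theorem separatedBy_of_not_nonempty_inter {w : E} {b : ℝ} {S K : Set E}
    (hS : ∀ x ∈ S, inner ℝ x w ≤ b) (hK : ¬ ({x | inner ℝ x w ≤ b} ∩ K).Nonempty) :
    SeparatedBy w S K :=
  ⟨b, hS, fun x hx => le_of_lt (not_le.1 fun h => hK ⟨x, h, hx⟩)⟩

theorem SeparatedBy.neg_symm {w : E} {S K : Set E} (h : SeparatedBy w S K) :
    SeparatedBy (-w) K S := by
  obtain ⟨c, hS, hK⟩ := h
  exact ⟨-c, fun x hx => by simpa [inner_neg_right] using hK x hx,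
    fun x hx => by simpa [inner_neg_right] using hS x hx⟩

end Separation

theorem stmt0_general (L : Finset Pl)
    (P Q : Set Pl) (hP : IsPolyDir L P) (hQ : IsPolyDir L Q)
    (hdisj : Disjoint P Q) :
    ∃ v ∈ L, ∃ w : Pl, w ≠ 0 ∧ (inner ℝ w v : ℝ) = 0 ∧
      ∃ c : ℝ, (∀ x ∈ P, (inner ℝ x w : ℝ) ≤ c) ∧ (∀ x ∈ Q, c ≤ (inner ℝ x w : ℝ)) := by
  classical
  obtain ⟨-, hPne, FP, hFP, rfl⟩ := hP
  obtain ⟨-, hQne, FQ, hFQ, rfl⟩ := hQ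
  by_contra hsep
  have hmem : ∀ {F : Finset (Pl × ℝ)}, ∀ q ∈ F, ∀ x ∈ ⋂ q ∈ F, {x : Pl | inner ℝ x q.1 ≤ q.2},
      inner ℝ x q.1 ≤ q.2 := fun q hq x hx => Set.mem_iInter₂.1 hx q hq
  have hPQ : ∀ q ∈ FP, ({x : Pl | inner ℝ x q.1 ≤ q.2} ∩
      ⋂ q ∈ FQ, {x : Pl | inner ℝ x q.1 ≤ q.2}).Nonempty := by
    intro q hq
    by_contra hempty
    obtain ⟨hq0, v, hv, hqv⟩ := hFP q hq
    exact hsep ⟨v, hv, q.1, hq0, hqv, separatedBy_of_not_nonempty_inter (hmem q hq) hempty⟩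
  have hQP : ∀ q ∈ FQ, ({x : Pl | inner ℝ x q.1 ≤ q.2} ∩
      ⋂ q ∈ FP, {x : Pl | inner ℝ x q.1 ≤ q.2}).Nonempty := by
    intro q hq
    by_contra hempty
    obtain ⟨hq0, v, hv, hqv⟩ := hFQ q hq
    exact hsep ⟨v, hv, -q.1, neg_ne_zero.2 hq0, by rw [inner_neg_left, hqv, neg_zero],
      (separatedBy_of_not_nonempty_inter (hmem q hq) hempty).neg_symm⟩
  obtain ⟨x, hxP, hxQ⟩ := Convex.inter_biInter_nonempty_of_finrank_eq_two
    finrank_euclideanSpace_fin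
    (fun q _ => convex_halfSpace_le (innerₗ Pl |>.flip q.1).isLinear q.2)
    hPne hQne hQP hPQ
  exact Set.disjoint_left.1 hdisj hxP hxQ

/-- Any two disjoint compact convex polygons with sides parallel to lines in `L` can be
separated by a line parallel to some line in `L`. -/
theorem stmt0 (L : Finset Pl) (hL : ∀ v ∈ L, v ≠ (0 : Pl))
    (P Q : Set Pl) (hP : IsPolyDir L P) (hQ : IsPolyDir L Q)
    (hdisj : Disjoint P Q) :
    ∃ v ∈ L, ∃ w : Pl, w ≠ 0 ∧ (inner ℝ w v : ℝ) = 0 ∧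
      ∃ c : ℝ, (∀ x ∈ P, (inner ℝ x w : ℝ) ≤ c) ∧ (∀ x ∈ Q, c ≤ (inner ℝ x w : ℝ)) :=
  stmt0_general L P Q hP hQ hdisj
end
end

section
/- The graph S_k, consisting of a (2k+1)-clique together with a pendant (degree-1) neighbor attached to each clique vertex, is not a k-DIR graph: it has no intersection representation by segments parallel to at most k directions. -/
/-!
By pigeonhole, three of the `2k+1` clique segments are parallel. Being pairwise intersecting,
they lie on one line, and pulled back to `ℝ` they become three pairwise intersecting intervals,
each containing a point (where it meets its pendant segment) that lies in neither of the others.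
This is impossible: the middle one of the three points lies in one of the two outer intervals,
since these intersect.
-/

noncomputable section

open Set AffineMap

section LinearOrder

variable {α ι : Type*} [LinearOrder α] {I : ι → Set α} {s : ι → α}

theorem eq_or_eq_of_le_of_le_of_ordConnected (hI : ∀ i, (I i).OrdConnected)
    (hI' : ∀ i j, (I i ∩ I j).Nonempty) (hs : ∀ i j, s i ∈ I j ↔ i = j) {i j l : ι}
    (hij : s i ≤ s j) (hjl : s j ≤ s l) : j = i ∨ j = l := by
  obtain ⟨w, hwi, hwl⟩ := hI' i l
  rcases le_total (s j) w with hjw | hwj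
  · exact .inl <| (hs j i).1 <| (hI i).out ((hs i i).2 rfl) hwi ⟨hij, hjw⟩
  · exact .inr <| (hs j l).1 <| (hI l).out hwl ((hs l l).2 rfl) ⟨hwj, hjl⟩

theorem eq_or_eq_or_eq_of_ordConnected (hI : ∀ i, (I i).OrdConnected)
    (hI' : ∀ i j, (I i ∩ I j).Nonempty) (hs : ∀ i j, s i ∈ I j ↔ i = j) (i j l : ι) :
    i = j ∨ i = l ∨ j = l := by
  have key {a b c : ι} : s a ≤ s b → s b ≤ s c → b = a ∨ b = c :=
    eq_or_eq_of_le_of_le_of_ordConnected hI hI' hs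
  -- in each of the eight sign patterns, some index lies between the other two
  rcases le_total (s i) (s j) with h₁ | h₁ <;> rcases le_total (s j) (s l) with h₂ | h₂ <;>
    rcases le_total (s i) (s l) with h₃ | h₃ <;>
    first
    | have := key h₁ h₂ | have := key h₂ h₁ | have := key h₁ h₃
    | have := key h₃ h₁ | have := key h₂ h₃ | have := key h₃ h₂
  all_goals grind

end LinearOrder

section Module

variable {E ι : Type*} [AddCommGroup E] [Module ℝ E]

theorem eq_or_eq_or_eq_of_convex_subset_range (f : ℝ →ᵃ[ℝ] E) {S : ι → Set E}
    (hS : ∀ i, Convex ℝ (S i)) (hf : ∀ i, S i ⊆ range f) (hS' : ∀ i j, (S i ∩ S j).Nonempty)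
    {x : ι → E} (hx : ∀ i j, x i ∈ S j ↔ i = j) (i j l : ι) : i = j ∨ i = l ∨ j = l := by
  choose s hs using fun m => hf m ((hx m m).2 rfl)
  refine eq_or_eq_or_eq_of_ordConnected (I := fun m => f ⁻¹' S m) (s := s)
    (fun m => ((hS m).affine_preimage f).ordConnected) (fun m n => ?_) (fun m n => ?_) i j l
  · obtain ⟨z, hzm, hzn⟩ := hS' m n
    obtain ⟨t, rfl⟩ := hf m hzm
    exact ⟨t, hzm, hzn⟩
  · simp only [mem_preimage, hs, hx]

theorem segment_subset_mk' {a b p : E} {W : Submodule ℝ E} (hab : b - a ∈ W)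
    (hp : (segment ℝ a b ∩ AffineSubspace.mk' p W).Nonempty) :
    segment ℝ a b ⊆ AffineSubspace.mk' p W := by
  have mk'_eq_of_mem {q r : E} (h : q ∈ AffineSubspace.mk' r W) :
      AffineSubspace.mk' q W = AffineSubspace.mk' r W := by
    simpa using AffineSubspace.mk'_eq h
  obtain ⟨y, hya, hyp⟩ := hp
  have ha : segment ℝ a b ⊆ AffineSubspace.mk' a W :=
    (AffineSubspace.mk' a W).convex.segment_subset (AffineSubspace.self_mem_mk' a W)
      (AffineSubspace.mem_mk'.2 hab)
  rwa [← mk'_eq_of_mem (ha hya), mk'_eq_of_mem hyp] at ha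

theorem mk'_span_singleton_subset_range_lineMap (p u : E) :
    (AffineSubspace.mk' p (ℝ ∙ u) : Set E) ⊆ range (lineMap p (u +ᵥ p) : ℝ → E) := by
  intro x hx
  obtain ⟨t, ht⟩ := Submodule.mem_span_singleton.1 (AffineSubspace.mem_mk'.1 hx)
  exact ⟨t, by rw [lineMap_vadd_apply, ht, vsub_vadd]⟩

theorem eq_or_eq_or_eq_of_parallel_segments (u : E) {a b : ι → E}
    (hab : ∀ i, b i - a i ∈ ℝ ∙ u)
    (hS : ∀ i j, (segment ℝ (a i) (b i) ∩ segment ℝ (a j) (b j)).Nonempty)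
    {x : ι → E} (hx : ∀ i j, x i ∈ segment ℝ (a j) (b j) ↔ i = j) (i j l : ι) :
    i = j ∨ i = l ∨ j = l := by
  have hi : segment ℝ (a i) (b i) ⊆ AffineSubspace.mk' (a i) (ℝ ∙ u) :=
    segment_subset_mk' (hab i) ⟨a i, left_mem_segment ℝ _ _, AffineSubspace.self_mem_mk' _ _⟩
  have hline (m : ι) : segment ℝ (a m) (b m) ⊆ AffineSubspace.mk' (a i) (ℝ ∙ u) :=
    segment_subset_mk' (hab m) ((hS m i).mono (inter_subset_inter_right _ hi))
  exact eq_or_eq_or_eq_of_convex_subset_range (lineMap (a i) (u +ᵥ a i))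
    (fun m => convex_segment _ _) (fun m => (hline m).trans
      (mk'_span_singleton_subset_range_lineMap _ _)) hS hx i j l

end Module

theorem stmt10_general (k : ℕ) (v : Fin k → Pl)
    (ca cb pa pb : Fin (2 * k + 1) → Pl)
    (dc : Fin (2 * k + 1) → Fin k)
    (hcd : ∀ i, ∃ t : ℝ, cb i - ca i = t • v (dc i))
    (hclique : ∀ i j, (segment ℝ (ca i) (cb i) ∩ segment ℝ (ca j) (cb j)).Nonempty)
    (hpend : ∀ i j, ((segment ℝ (pa i) (pb i) ∩ segment ℝ (ca j) (cb j)).Nonempty ↔ i = j)) :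
    False := by
  obtain ⟨d, hd⟩ := Fintype.exists_lt_card_fiber_of_mul_lt_card (f := dc) (n := 2)
    (by simp only [Fintype.card_fin]; omega)
  rw [← Fintype.card_subtype, Fintype.two_lt_card_iff] at hd
  obtain ⟨i, j, l, hij, hil, hjl⟩ := hd
  have hpriv (m : Fin (2 * k + 1)) :
      ∃ x ∈ segment ℝ (ca m) (cb m), ∀ n, x ∈ segment ℝ (ca n) (cb n) → m = n := by
    obtain ⟨x, hxp, hxc⟩ := (hpend m m).2 rfl
    exact ⟨x, hxc, fun n hxn => (hpend m n).1 ⟨x, hxp, hxn⟩⟩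
  choose x hx hx' using hpriv
  have hpar (m : {m // dc m = d}) : cb m - ca m ∈ ℝ ∙ v d := by
    obtain ⟨t, ht⟩ := hcd m
    exact Submodule.mem_span_singleton.2 ⟨t, by rw [ht, m.2]⟩
  rcases eq_or_eq_or_eq_of_parallel_segments (v d) hpar (fun m n => hclique m n)
    (x := fun m => x m) (fun m n => ⟨fun h => Subtype.ext (hx' m n h), by rintro rfl; exact hx m⟩)
    i j l with h | h | h <;> contradiction

/-- The graph `S_k` — a `(2k+1)`-clique `c₁,…,c_{2k+1}` with a pendant neighbor `pᵢ` attached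
to each clique vertex — has no intersection representation by segments parallel to at most
`k` directions: there is no family of segments `C i` (for the clique) and `P i` (for the
pendants), each parallel to one of `k` nonzero direction vectors, such that the `C i`
pairwise intersect, `P i` meets `C j` iff `i = j`, and the `P i` are pairwise disjoint. -/
theorem stmt10 (k : ℕ) (hk : 1 ≤ k) (v : Fin k → Pl) (hv : ∀ i, v i ≠ 0)
    (ca cb pa pb : Fin (2 * k + 1) → Pl)
    (dc dp : Fin (2 * k + 1) → Fin k)
    (hcd : ∀ i, ∃ t : ℝ, cb i - ca i = t • v (dc i))
    (hpd : ∀ i, ∃ t : ℝ, pb i - pa i = t • v (dp i))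
    (hclique : ∀ i j, (segment ℝ (ca i) (cb i) ∩ segment ℝ (ca j) (cb j)).Nonempty)
    (hpend : ∀ i j, ((segment ℝ (pa i) (pb i) ∩ segment ℝ (ca j) (cb j)).Nonempty ↔ i = j))
    (hpp : ∀ i j, i ≠ j → ¬ (segment ℝ (pa i) (pb i) ∩ segment ℝ (pa j) (pb j)).Nonempty) :
    False :=
  stmt10_general k v ca cb pa pb dc hcd hclique hpend
end
end

section
/- If three pairwise intersecting segments lie on a common line, then at most two of them can have 'private neighbors', i.e., it is impossible to have three additional segments t₁, t₂, t₃ with tᵢ intersecting only the i-th collinear segment and no other. -/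
/-!
Parametrise the common line by an injective affine map `ℝ → ℝ²`; the segments become pairwise
intersecting intervals. Let `i` be the interval with the leftmost left end and `j` the one with
the rightmost right end. Since they meet, `sᵢ ∪ sⱼ` covers every other interval `sₖ`, so the
segment `tₖ` that meets `sₖ` must also meet `sᵢ` or `sⱼ`.
-/

noncomputable section

open Set

theorem exists_Icc_subset_union_Icc {α ι : Type*} [LinearOrder α] [Finite ι]
    (hι : 3 ≤ Nat.card ι) (L R : ι → α)
    (hinter : ∀ i j, (Icc (L i) (R i) ∩ Icc (L j) (R j)).Nonempty) :
    ∃ k i j, i ≠ k ∧ j ≠ k ∧ Icc (L k) (R k) ⊆ Icc (L i) (R i) ∪ Icc (L j) (R j) := by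
  have : Nonempty ι := (Nat.card_pos_iff.mp (by omega)).1
  obtain ⟨i, hi⟩ := Finite.exists_min L
  obtain ⟨j, hj⟩ := Finite.exists_max R
  obtain ⟨k, hki, hkj⟩ := ENat.exists_ne_ne_of_three_le
    (by rw [ENat.card_eq_coe_natCard]; exact_mod_cast hι) i j
  refine ⟨k, i, j, hki.symm, hkj.symm, fun x hx => ?_⟩
  obtain ⟨y, hyi, hyj⟩ := hinter i j
  rcases le_or_gt x (R i) with hxi | hxi
  · exact Or.inl ⟨(hi k).trans hx.1, hxi⟩
  · exact Or.inr ⟨hyj.1.trans (hyi.2.trans hxi.le), hx.2.trans (hj k)⟩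

theorem exists_segment_subset_union_segment {𝕜 E ι : Type*} [Field 𝕜] [LinearOrder 𝕜]
    [IsStrictOrderedRing 𝕜] [AddCommGroup E] [Module 𝕜 E] [Finite ι]
    (hι : 3 ≤ Nat.card ι) {p v : E} (hv : v ≠ 0) (x y : ι → 𝕜)
    (hinter : ∀ i j, (segment 𝕜 (p + x i • v) (p + y i • v) ∩
      segment 𝕜 (p + x j • v) (p + y j • v)).Nonempty) :
    ∃ k i j, i ≠ k ∧ j ≠ k ∧ segment 𝕜 (p + x k • v) (p + y k • v) ⊆
      segment 𝕜 (p + x i • v) (p + y i • v) ∪ segment 𝕜 (p + x j • v) (p + y j • v) := by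
  set f : 𝕜 →ᵃ[𝕜] E := AffineMap.lineMap p (p + v)
  have hf : ∀ t, f t = p + t • v := fun t => by
    simp [f, AffineMap.lineMap_apply, add_comm]
  have hf_inj : Function.Injective f :=
    AffineMap.lineMap_injective 𝕜 (by simpa [eq_comm] using hv)
  have hseg : ∀ i, segment 𝕜 (p + x i • v) (p + y i • v) = f '' uIcc (x i) (y i) := fun i => by
    rw [← hf, ← hf, ← image_segment, segment_eq_uIcc]
  simp only [hseg, ← image_inter hf_inj, image_nonempty, ← image_union] at hinter ⊢
  obtain ⟨k, i, j, hik, hjk, hsub⟩ := exists_Icc_subset_union_Icc hι _ _ hinter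
  exact ⟨k, i, j, hik, hjk, image_mono hsub⟩

/-- If three pairwise intersecting segments all lie on a common line, then they cannot all
have private neighbors: there are no segments `t₁, t₂, t₃` such that `tᵢ` intersects the
`i`-th collinear segment and is disjoint from the other two. -/
theorem stmt11 (p v : Pl) (hv : v ≠ 0) (a b : Fin 3 → Pl)
    (hline : ∀ i, (∃ t : ℝ, a i = p + t • v) ∧ (∃ t : ℝ, b i = p + t • v))
    (hint : ∀ i j : Fin 3, (segment ℝ (a i) (b i) ∩ segment ℝ (a j) (b j)).Nonempty)
    (ta tb : Fin 3 → Pl)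
    (hpriv : ∀ i j : Fin 3,
      ((segment ℝ (ta i) (tb i) ∩ segment ℝ (a j) (b j)).Nonempty ↔ i = j)) :
    False := by
  choose x hx using fun i => (hline i).1
  choose y hy using fun i => (hline i).2
  obtain rfl : a = fun i => p + x i • v := funext hx
  obtain rfl : b = fun i => p + y i • v := funext hy
  obtain ⟨k, i, j, hik, hjk, hcover⟩ :=
    exists_segment_subset_union_segment (by simp) hv x y hint
  obtain ⟨q, hq_t, hq_s⟩ := (hpriv k k).mpr rfl
  rcases hcover hq_s with hq_i | hq_j
  · exact hik ((hpriv k i).mp ⟨q, hq_t, hq_i⟩).symm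
  · exact hjk ((hpriv k j).mp ⟨q, hq_t, hq_j⟩).symm
end
end

section
/- For any two nonempty disjoint convex polytopes P₁ and P₂ in ℝ^d, there exists a separating hyperplane H parallel to a d₁-dimensional face of P₁ and to a d₂-dimensional face of P₂ with d₁ + d₂ ≥ d − 1 (where faces of dimension 0 are vertices); in particular, disjoint full-dimensional convex polytopes can be separated by a hyperplane parallel to an i-dimensional face of one and a (d−1−i)-dimensional face of the other for some i. -/
/-!
Let `S` be the set of differences `b - a` of vertices `b` of `P₂` and `a` of `P₁`, so that
`0 ∉ conv S`. By separation some `w` satisfies `1 ≤ ⟪s, w⟫` on `S`; among these take one with the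
largest set `T` of points where equality holds. If `T` did not span `span S`, moving `w`
orthogonally to `T` towards a point of `S` outside `span T` would make a further constraint tight.
Hence `span T = span S`, so the affine span of `T` has dimension at least `dim span S - 1`. Every
`t ∈ T` is `b - a` with `a` on the face of `P₁` maximising `⟪·, w⟫` and `b` on the face of `P₂`
minimising it, so these two faces have dimensions adding up to at least `dim aff(P₁ ∪ P₂) - 1`.
-/

noncomputable section

variable {d : ℕ}

/-- A (compact convex) polytope: the convex hull of a finite set of points. -/
def IsPolytope (P : Set (EuclideanSpace ℝ (Fin d))) : Prop :=
  ∃ F : Finset (EuclideanSpace ℝ (Fin d)), P = convexHull ℝ (F : Set (EuclideanSpace ℝ (Fin d)))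

/-- The dimension of a subset of `ℝ^d`: the dimension of its affine span. -/
noncomputable def sdim (A : Set (EuclideanSpace ℝ (Fin d))) : ℕ :=
  Module.finrank ℝ (affineSpan ℝ A).direction

open Finset Module Submodule
open scoped RealInnerProductSpace Pointwise

section Span

variable {k V : Type*} [AddCommGroup V]

section Ring

variable [Ring k] [Module k V]

lemma vectorSpan_union_le_span_sub {s t : Set V} (hs : s.Nonempty) (ht : t.Nonempty) :
    vectorSpan k (s ∪ t) ≤ span k (t - s) := by
  obtain ⟨a, ha⟩ := hs
  obtain ⟨b, hb⟩ := ht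
  rw [vectorSpan_eq_span_vsub_set_right k (Set.mem_union_left t ha), span_le]
  rintro _ ⟨x, hx | hx, rfl⟩
  · show x - a ∈ span k (t - s)
    rw [show x - a = (b - a) - (b - x) by abel]
    exact sub_mem (subset_span (Set.sub_mem_sub hb ha)) (subset_span (Set.sub_mem_sub hb hx))
  · exact subset_span (Set.sub_mem_sub hx ha)

lemma vectorSpan_sub_le (s t : Set V) : vectorSpan k (t - s) ≤ vectorSpan k s ⊔ vectorSpan k t := by
  rw [vectorSpan_def, span_le]
  rintro _ ⟨_, ⟨b, hb, a, ha, rfl⟩, _, ⟨b', hb', a', ha', rfl⟩, rfl⟩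
  show (b - a) - (b' - a') ∈ _
  rw [show (b - a) - (b' - a') = (a' - a) + (b - b') by abel]
  exact add_mem (mem_sup_left (vsub_mem_vectorSpan k ha' ha))
    (mem_sup_right (vsub_mem_vectorSpan k hb hb'))

end Ring

variable [DivisionRing k] [Module k V]

lemma finrank_span_le_finrank_vectorSpan_add_one (s : Set V) :
    finrank k (span k s) ≤ finrank k (vectorSpan k s) + 1 := by
  have hspan : span k s = vectorSpan k (insert 0 s) := by
    rw [vectorSpan_eq_span_vsub_set_right k (Set.mem_insert 0 s)]
    simp
  rw [hspan]
  exact finrank_vectorSpan_insert_le_set k s 0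

lemma finrank_vectorSpan_union_le [FiniteDimensional k V] {s t T G₁ G₂ : Set V}
    (hs : s.Nonempty) (ht : t.Nonempty) (hT : span k (t - s) ≤ span k T) (hTG : T ⊆ G₂ - G₁) :
    finrank k (vectorSpan k (s ∪ t)) ≤
      finrank k (vectorSpan k G₁) + finrank k (vectorSpan k G₂) + 1 :=
  calc finrank k (vectorSpan k (s ∪ t))
      ≤ finrank k (span k T) := finrank_mono ((vectorSpan_union_le_span_sub hs ht).trans hT)
    _ ≤ finrank k (vectorSpan k T) + 1 := finrank_span_le_finrank_vectorSpan_add_one T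
    _ ≤ finrank k ↥(vectorSpan k G₁ ⊔ vectorSpan k G₂) + 1 :=
        Nat.add_le_add_right
          (finrank_mono ((vectorSpan_mono k hTG).trans (vectorSpan_sub_le G₁ G₂))) 1
    _ ≤ finrank k (vectorSpan k G₁) + finrank k (vectorSpan k G₂) + 1 :=
        Nat.add_le_add_right (finrank_add_le_finrank_add_finrank _ _) 1

end Span

section InnerProductSpace

variable {E : Type*} [NormedAddCommGroup E] [InnerProductSpace ℝ E]

lemma inner_le_of_mem_convexHull {F : Set E} {w x : E} {c : ℝ} (hF : ∀ a ∈ F, ⟪a, w⟫ ≤ c)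
    (hx : x ∈ convexHull ℝ F) : ⟪x, w⟫ ≤ c :=
  convexHull_min hF (convex_halfSpace_le
    ⟨fun x y => inner_add_left x y w, fun c x => real_inner_smul_left x w c⟩ c) hx

lemma le_inner_of_mem_convexHull {F : Set E} {w x : E} {c : ℝ} (hF : ∀ a ∈ F, c ≤ ⟪a, w⟫)
    (hx : x ∈ convexHull ℝ F) : c ≤ ⟪x, w⟫ :=
  convexHull_min hF (convex_halfSpace_ge
    ⟨fun x y => inner_add_left x y w, fun c x => real_inner_smul_left x w c⟩ c) hx

lemma exists_mem_orthogonal_inner_neg {K : Submodule ℝ E} [K.HasOrthogonalProjection] {x : E}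
    (hx : x ∉ K) : ∃ u ∈ Kᗮ, ⟪x, u⟫ < 0 := by
  by_contra! h
  refine hx (K.orthogonal_orthogonal ▸ (Kᗮ.mem_orthogonal' x).2 fun u hu => ?_)
  have hneg := h (-u) (neg_mem hu)
  rw [inner_neg_right] at hneg
  exact le_antisymm (by linarith) (h u hu)

/-- The nearest point `p` of `conv S` to `0` satisfies `‖p‖² ≤ ⟪s, p⟫` on `S`. -/
lemma exists_one_le_inner_of_zero_notMem_convexHull {S : Finset E}
    (h0 : (0 : E) ∉ convexHull ℝ (S : Set E)) : ∃ w : E, ∀ s ∈ S, 1 ≤ ⟪s, w⟫ := by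
  obtain rfl | hS := S.eq_empty_or_nonempty
  · exact ⟨0, by simp⟩
  have hconv : Convex ℝ (convexHull ℝ (S : Set E)) := convex_convexHull ℝ _
  obtain ⟨p, hp, hmin⟩ := exists_norm_eq_iInf_of_complete_convex
    (convexHull_nonempty_iff.2 (coe_nonempty.2 hS))
    (S.finite_toSet.isCompact_convexHull ℝ).isComplete hconv 0
  have hobtuse := (norm_eq_iInf_iff_real_inner_le_zero hconv hp).1 hmin
  have hpos : 0 < ‖p‖ ^ 2 := by
    have hp0 : p ≠ 0 := fun h => h0 (h ▸ hp)
    positivity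
  refine ⟨(‖p‖ ^ 2)⁻¹ • p, fun s hs => ?_⟩
  have hsp := hobtuse s (subset_convexHull ℝ _ hs)
  rw [zero_sub, inner_neg_left, inner_sub_right, real_inner_self_eq_norm_sq,
    real_inner_comm] at hsp
  rw [real_inner_smul_right, inv_mul_eq_div, le_div_iff₀ hpos]
  linarith

def tightSet (S : Finset E) (w : E) : Finset E := S.filter (⟪·, w⟫ = 1)

lemma mem_tightSet {S : Finset E} {w s : E} : s ∈ tightSet S w ↔ s ∈ S ∧ ⟪s, w⟫ = 1 :=
  mem_filter

lemma exists_tightSet_ssubset {S : Finset E} {w u : E} (hw : ∀ s ∈ S, 1 ≤ ⟪s, w⟫)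
    (hu : ∀ s ∈ tightSet S w, ⟪s, u⟫ = 0) (hneg : ∃ s ∈ S, ⟪s, u⟫ < 0) :
    ∃ w' : E, (∀ s ∈ S, 1 ≤ ⟪s, w'⟫) ∧ tightSet S w ⊂ tightSet S w' := by
  set N := S.filter (⟪·, u⟫ < 0)
  have hN : N.Nonempty := by
    obtain ⟨s, hs, hsu⟩ := hneg
    exact ⟨s, mem_filter.2 ⟨hs, hsu⟩⟩
  -- the largest `t` keeping `w + t • u` feasible
  obtain ⟨s₁, hs₁N, hs₁⟩ := N.exists_min_image (fun s => (⟪s, w⟫ - 1) / -⟪s, u⟫) hN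
  obtain ⟨hs₁S, hs₁u⟩ := mem_filter.1 hs₁N
  set t := (⟪s₁, w⟫ - 1) / -⟪s₁, u⟫ with ht_def
  have ht : 0 ≤ t := div_nonneg (sub_nonneg.2 (hw s₁ hs₁S)) (neg_nonneg.2 hs₁u.le)
  have hval : ∀ s, ⟪s, w + t • u⟫ = ⟪s, w⟫ + t * ⟪s, u⟫ := fun s => by
    rw [inner_add_right, real_inner_smul_right]
  refine ⟨w + t • u, fun s hs => ?_, (ssubset_iff_of_subset fun s hs => ?_).2 ⟨s₁, ?_, ?_⟩⟩
  · rw [hval]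
    by_cases hsu : ⟪s, u⟫ < 0
    · have hle := hs₁ s (mem_filter.2 ⟨hs, hsu⟩)
      rw [le_div_iff₀ (neg_pos.2 hsu)] at hle
      linarith
    · nlinarith [hw s hs]
  · obtain ⟨hsS, hsw⟩ := mem_tightSet.1 hs
    exact mem_tightSet.2 ⟨hsS, by rw [hval, hu s hs, hsw]; ring⟩
  · refine mem_tightSet.2 ⟨hs₁S, ?_⟩
    rw [hval, ht_def]
    field_simp [hs₁u.ne]
    ring
  · exact fun h => hs₁u.ne (hu s₁ h)

lemma exists_tightSet_ssubset_of_notMem_span {S : Finset E} {w s : E}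
    (hw : ∀ s ∈ S, 1 ≤ ⟪s, w⟫) (hs : s ∈ S) (hspan : s ∉ span ℝ (tightSet S w : Set E)) :
    ∃ w' : E, (∀ s ∈ S, 1 ≤ ⟪s, w'⟫) ∧ tightSet S w ⊂ tightSet S w' := by
  obtain ⟨u, hu, hsu⟩ := exists_mem_orthogonal_inner_neg hspan
  exact exists_tightSet_ssubset hw
    (fun t ht => inner_right_of_mem_orthogonal (subset_span ht) hu) ⟨s, hs, hsu⟩

lemma exists_span_tightSet_eq {S : Finset E} (h : ∃ w : E, ∀ s ∈ S, 1 ≤ ⟪s, w⟫) :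
    ∃ w : E, (∀ s ∈ S, 1 ≤ ⟪s, w⟫) ∧ span ℝ (tightSet S w : Set E) = span ℝ S := by
  classical
  set C := S.powerset.filter fun T => ∃ w : E, (∀ s ∈ S, 1 ≤ ⟪s, w⟫) ∧ tightSet S w = T
  have hmemC : ∀ w : E, (∀ s ∈ S, 1 ≤ ⟪s, w⟫) → tightSet S w ∈ C := fun w hw =>
    mem_filter.2 ⟨mem_powerset.2 (filter_subset _ _), w, hw, rfl⟩
  obtain ⟨w₀, hw₀⟩ := h
  obtain ⟨T, hTC, hmax⟩ := C.exists_max_image card ⟨_, hmemC w₀ hw₀⟩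
  obtain ⟨-, w, hw, rfl⟩ := mem_filter.1 hTC
  refine ⟨w, hw, le_antisymm (span_mono (filter_subset _ _)) (span_le.2 fun s hs => ?_)⟩
  by_contra hspan
  obtain ⟨w', hw', hlt⟩ := exists_tightSet_ssubset_of_notMem_span hw hs hspan
  exact (card_lt_card hlt).not_ge (hmax _ (hmemC w' hw'))

variable [FiniteDimensional ℝ E]

theorem exists_separating_faces {F₁ F₂ : Finset E} {P₁ P₂ : Set E}
    (hP₁ : P₁ = convexHull ℝ (F₁ : Set E)) (hP₂ : P₂ = convexHull ℝ (F₂ : Set E))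
    (hF₁ : F₁.Nonempty) (hF₂ : F₂.Nonempty) (hdisj : Disjoint P₁ P₂) :
    ∃ (w : E) (c₁ c₂ : ℝ), w ≠ 0 ∧ c₁ ≤ c₂ ∧
      (∀ x ∈ P₁, ⟪x, w⟫ ≤ c₁) ∧ (∀ x ∈ P₂, c₂ ≤ ⟪x, w⟫) ∧
      (P₁ ∩ {x | ⟪x, w⟫ = c₁}).Nonempty ∧ (P₂ ∩ {x | ⟪x, w⟫ = c₂}).Nonempty ∧
      finrank ℝ (affineSpan ℝ (convexHull ℝ (P₁ ∪ P₂))).direction ≤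
        finrank ℝ (affineSpan ℝ (P₁ ∩ {x | ⟪x, w⟫ = c₁})).direction +
        finrank ℝ (affineSpan ℝ (P₂ ∩ {x | ⟪x, w⟫ = c₂})).direction + 1 := by
  classical
  have hS0 : (0 : E) ∉ convexHull ℝ ((F₂ - F₁ : Finset E) : Set E) := by
    rw [coe_sub, convexHull_sub, Set.zero_mem_sub_iff, not_not, ← hP₁, ← hP₂]
    exact hdisj.symm
  obtain ⟨w, hw, hspan⟩ :=
    exists_span_tightSet_eq (exists_one_le_inner_of_zero_notMem_convexHull hS0)
  obtain ⟨a₀, ha₀, hmax⟩ := F₁.exists_max_image (⟪·, w⟫) hF₁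
  obtain ⟨b₀, hb₀, hmin⟩ := F₂.exists_min_image (⟪·, w⟫) hF₂
  have hgap : 1 ≤ ⟪b₀, w⟫ - ⟪a₀, w⟫ := by
    simpa only [inner_sub_left] using hw _ (sub_mem_sub hb₀ ha₀)
  have hw0 : w ≠ 0 := by
    rintro rfl
    norm_num at hgap
  have hP₁w : ∀ x ∈ P₁, ⟪x, w⟫ ≤ ⟪a₀, w⟫ := fun x hx =>
    inner_le_of_mem_convexHull hmax (hP₁ ▸ hx)
  have hP₂w : ∀ x ∈ P₂, ⟪b₀, w⟫ ≤ ⟪x, w⟫ := fun x hx =>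
    le_inner_of_mem_convexHull hmin (hP₂ ▸ hx)
  set G₁ := P₁ ∩ {x | ⟪x, w⟫ = ⟪a₀, w⟫}
  set G₂ := P₂ ∩ {x | ⟪x, w⟫ = ⟪b₀, w⟫}
  have hP₁a₀ : a₀ ∈ P₁ := hP₁ ▸ subset_convexHull ℝ _ ha₀
  have hP₂b₀ : b₀ ∈ P₂ := hP₂ ▸ subset_convexHull ℝ _ hb₀
  -- `1 = ⟪b, w⟫ - ⟪a, w⟫ ≥ ⟪b₀, w⟫ - ⟪a₀, w⟫ ≥ 1` forces both faces to be hit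
  have htight : (tightSet (F₂ - F₁) w : Set E) ⊆ G₂ - G₁ := by
    intro s hs
    obtain ⟨hsS, hsw⟩ := mem_tightSet.1 hs
    obtain ⟨b, hb, a, ha, rfl⟩ := mem_sub.1 hsS
    have hbP := hP₂ ▸ subset_convexHull ℝ _ hb
    have haP := hP₁ ▸ subset_convexHull ℝ _ ha
    rw [inner_sub_left] at hsw
    have := hP₁w a haP
    have := hP₂w b hbP
    exact Set.sub_mem_sub ⟨hbP, (by linarith : ⟪b, w⟫ = ⟪b₀, w⟫)⟩
      ⟨haP, (by linarith : ⟪a, w⟫ = ⟪a₀, w⟫)⟩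
  refine ⟨w, _, _, hw0, by linarith, hP₁w, hP₂w, ⟨a₀, hP₁a₀, rfl⟩, ⟨b₀, hP₂b₀, rfl⟩, ?_⟩
  have hhull : affineSpan ℝ (convexHull ℝ (P₁ ∪ P₂)) = affineSpan ℝ ((F₁ : Set E) ∪ F₂) := by
    rw [affineSpan_convexHull, AffineSubspace.span_union, AffineSubspace.span_union, hP₁, hP₂,
      affineSpan_convexHull, affineSpan_convexHull]
  rw [hhull, direction_affineSpan, direction_affineSpan, direction_affineSpan]
  exact finrank_vectorSpan_union_le (coe_nonempty.2 hF₁) (coe_nonempty.2 hF₂)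
    (by rw [← coe_sub, hspan]) htight

end InnerProductSpace

/-- Wright's separation theorem: two nonempty disjoint convex polytopes `P₁, P₂` in `ℝ^d`
can be separated by parallel hyperplanes `H₁ = {⟪·,w⟫ = c₁}` and `H₂ = {⟪·,w⟫ = c₂}`
supporting nonempty faces of `P₁` and `P₂` respectively, with
`dim(H₁ ∩ P₁) + dim(H₂ ∩ P₂) ≥ dim(conv(P₁ ∪ P₂)) − 1`. -/
theorem stmt17 (d : ℕ) (P₁ P₂ : Set (EuclideanSpace ℝ (Fin d)))
    (h₁ : IsPolytope P₁) (h₂ : IsPolytope P₂)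
    (hne₁ : P₁.Nonempty) (hne₂ : P₂.Nonempty)
    (hdisj : Disjoint P₁ P₂) :
    ∃ (w : EuclideanSpace ℝ (Fin d)) (c₁ c₂ : ℝ), w ≠ 0 ∧ c₁ ≤ c₂ ∧
      (∀ x ∈ P₁, (inner ℝ x w : ℝ) ≤ c₁) ∧
      (∀ x ∈ P₂, c₂ ≤ (inner ℝ x w : ℝ)) ∧
      (P₁ ∩ {x | (inner ℝ x w : ℝ) = c₁}).Nonempty ∧
      (P₂ ∩ {x | (inner ℝ x w : ℝ) = c₂}).Nonempty ∧
      sdim (convexHull ℝ (P₁ ∪ P₂)) ≤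
        sdim (P₁ ∩ {x | (inner ℝ x w : ℝ) = c₁}) +
        sdim (P₂ ∩ {x | (inner ℝ x w : ℝ) = c₂}) + 1 := by
  obtain ⟨F₁, hP₁⟩ := h₁
  obtain ⟨F₂, hP₂⟩ := h₂
  have hF₁ : F₁.Nonempty := coe_nonempty.1 (convexHull_nonempty_iff.1 (hP₁ ▸ hne₁))
  have hF₂ : F₂.Nonempty := coe_nonempty.1 (convexHull_nonempty_iff.1 (hP₂ ▸ hne₂))
  exact exists_separating_faces hP₁ hP₂ hF₁ hF₂ hdisj

end
end
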